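/- Let (Γ_n) be a sequence of finite connected graphs with vertex degrees uniformly bounded by d ≥ 2, with |V(Γ_n)| → ∞, satisfying a uniform Poincaré-type inequality with respect to a Banach space E and exponent q ∈ [1,∞): there is C > 0 such that for every n and every f : V(Γ_n) → E, (1/|V(Γ_n)|) Σ_{v} ‖f(v) - m(f)‖^q ≤ C · (1/|V(Γ_n)|) Σ_{(v,w)∈E(Γ_n)} ‖f(v) - f(w)‖^q, where m(f) = (1/|V(Γ_n)|) Σ_v f(v). Then the disjoint union ⨆_n Γ_n (with the shortest-path metric on each component and distance +∞ between components) admits no coarse embedding into E. -/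
import Mathlib

open Finset

/-- Ball growth bound in a bounded-degree connected graph. -/
lemma ball_card_le_aux {V : Type*} [Fintype V] [DecidableEq V] (G : SimpleGraph V)
    [DecidableRel G.Adj] {d : ℕ} (hdeg : ∀ v, G.degree v ≤ d) (hconn : G.Connected)
    (v : V) (r : ℕ) :
    (Finset.univ.filter (fun w => G.dist v w ≤ r)).card ≤ (d + 1) ^ r := by
  induction r with
  | zero =>
    have hsub : Finset.univ.filter (fun w => G.dist v w ≤ 0) ⊆ {v} := by
      intro w hw
      simp only [Finset.mem_filter, Nat.le_zero] at hw
      have : v = w := (hconn.dist_eq_zero_iff).mp hw.2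
      simp [this]
    simpa using Finset.card_le_card hsub
  | succ r ih =>
    have hsub : Finset.univ.filter (fun w => G.dist v w ≤ r + 1) ⊆
        (Finset.univ.filter (fun w => G.dist v w ≤ r)) ∪
          (Finset.univ.filter (fun w => G.dist v w ≤ r)).biUnion
            (fun u => G.neighborFinset u) := by
      intro w hw
      simp only [Finset.mem_filter, Finset.mem_univ, true_and] at hw
      by_cases h : G.dist v w ≤ r
      · exact Finset.mem_union_left _ (by simp [h])
      · have hdist : G.dist v w = r + 1 := le_antisymm hw (by omega)
        obtain ⟨p, hp⟩ := (hconn w v).exists_walk_length_eq_dist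
        rw [SimpleGraph.dist_comm, hdist] at hp
        cases p with
        | nil => simp at hp
        | @cons _ u _ hadj q =>
          have hql : q.length = r := by simpa using hp
          have hu : G.dist v u ≤ r := by
            have := SimpleGraph.dist_le q.reverse
            simpa [hql] using this
          refine Finset.mem_union_right _ (Finset.mem_biUnion.mpr ⟨u, by simp [hu], ?_⟩)
          simp [SimpleGraph.mem_neighborFinset, hadj.symm]
    calc (Finset.univ.filter (fun w => G.dist v w ≤ r + 1)).card
        ≤ _ := Finset.card_le_card hsub
      _ ≤ (Finset.univ.filter (fun w => G.dist v w ≤ r)).card +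
            ((Finset.univ.filter (fun w => G.dist v w ≤ r)).biUnion
              (fun u => G.neighborFinset u)).card := Finset.card_union_le _ _
      _ ≤ (d + 1) ^ r + ∑ u ∈ Finset.univ.filter (fun w => G.dist v w ≤ r),
            (G.neighborFinset u).card := by
          gcongr
          exact Finset.card_biUnion_le
      _ ≤ (d + 1) ^ r + ∑ u ∈ Finset.univ.filter (fun w => G.dist v w ≤ r), d := by
          gcongr with u hu
          simpa [SimpleGraph.card_neighborFinset_eq_degree] using hdeg u
      _ ≤ (d + 1) ^ r + (d + 1) ^ r * d := by
          simp only [Finset.sum_const, smul_eq_mul]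
          gcongr
      _ = (d + 1) ^ (r + 1) := by ring

/-- If a sequence of finite connected graphs of uniformly bounded degree, with
sizes tending to infinity, satisfies a uniform `(E,q)`-Poincaré inequality,
then its disjoint union (shortest-path metric within components, `+∞` across
components) admits no coarse embedding into the Banach space `E`. -/
theorem poincare_expanders_no_coarse_embedding
    {V : ℕ → Type*} [∀ n, Fintype (V n)]
    (Γ : ∀ n, SimpleGraph (V n)) [∀ n, DecidableRel (Γ n).Adj]
    (E : Type*) [NormedAddCommGroup E] [NormedSpace ℝ E] [CompleteSpace E]
    (d : ℕ) (hd : 2 ≤ d)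
    (hdeg : ∀ n (v : V n), (Γ n).degree v ≤ d)
    (hconn : ∀ n, (Γ n).Connected)
    (hcard : Filter.Tendsto (fun n => Fintype.card (V n)) Filter.atTop Filter.atTop)
    (q : ℝ) (hq : 1 ≤ q) (C : ℝ) (hC : 0 < C)
    (hpoincare : ∀ n (f : V n → E),
      ((Fintype.card (V n) : ℝ))⁻¹ *
          ∑ v : V n, ‖f v - ((Fintype.card (V n) : ℝ))⁻¹ • ∑ u : V n, f u‖ ^ q ≤
        C * (((Fintype.card (V n) : ℝ))⁻¹ *
          ∑ v : V n, ∑ w ∈ (Γ n).neighborFinset v, ‖f v - f w‖ ^ q)) :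
    ¬ ∃ (f : (Σ n, V n) → E) (ρ ω : ℝ → ℝ),
        Monotone ρ ∧ Monotone ω ∧
        Filter.Tendsto ρ Filter.atTop Filter.atTop ∧
        Filter.Tendsto ω Filter.atTop Filter.atTop ∧
        ∀ n (a b : V n),
          ρ ((Γ n).dist a b : ℝ) ≤ ‖f ⟨n, a⟩ - f ⟨n, b⟩‖ ∧
            ‖f ⟨n, a⟩ - f ⟨n, b⟩‖ ≤ ω ((Γ n).dist a b : ℝ) := by
  classical
  rintro ⟨f, ρ, ω, hρm, hωm, hρt, hωt, hfb⟩
  have hq0 : (0:ℝ) < q := lt_of_lt_of_le one_pos hq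
  set W : ℝ := max (ω 1) 0 with hWdef
  have hW0 : (0:ℝ) ≤ W := le_max_right _ _
  set K : ℝ := C * d * W ^ q with hKdef
  have hWq0 : (0:ℝ) ≤ W ^ q := Real.rpow_nonneg hW0 _
  have hK0 : (0:ℝ) ≤ K := by
    apply mul_nonneg (mul_nonneg hC.le (Nat.cast_nonneg d)) hWq0
  set B : ℝ := (2 * K + 1) ^ q⁻¹ with hBdef
  have h2K1 : (0:ℝ) < 2 * K + 1 := by linarith
  have hB0 : (0:ℝ) ≤ B := Real.rpow_nonneg h2K1.le _
  have hBq : B ^ q = 2 * K + 1 := Real.rpow_inv_rpow h2K1.le hq0.ne'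
  -- choose a radius r with ρ r large
  obtain ⟨x0, hx0⟩ := Filter.eventually_atTop.mp (hρt.eventually_ge_atTop (2 * B + 1))
  set r : ℕ := ⌈x0⌉₊ with hrdef
  have hρr : 2 * B + 1 ≤ ρ (r : ℝ) := hx0 _ (Nat.le_ceil x0)
  -- choose n with many vertices
  obtain ⟨n, hn⟩ := (hcard.eventually_ge_atTop (2 * (d + 1) ^ r + 1)).exists
  set N : ℕ := Fintype.card (V n) with hNdef
  have hNR : (2:ℝ) * ((d:ℝ) + 1) ^ r < (N : ℝ) := by
    have : ((2 * (d + 1) ^ r + 1 : ℕ) : ℝ) ≤ (N : ℝ) := by exact_mod_cast hn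
    push_cast at this
    linarith
  have hP0 : (0:ℝ) < ((d:ℝ) + 1) ^ r := by positivity
  have hN0 : (0:ℝ) < (N : ℝ) := by linarith
  set g : V n → E := fun v => f ⟨n, v⟩ with hgdef
  set m : E := ((N : ℝ))⁻¹ • ∑ u : V n, g u with hmdef
  -- edge sums are small
  have hedge : ∀ v : V n, ∑ w ∈ (Γ n).neighborFinset v, ‖g v - g w‖ ^ q ≤ (d : ℝ) * W ^ q := by
    intro v
    calc ∑ w ∈ (Γ n).neighborFinset v, ‖g v - g w‖ ^ q
        ≤ ∑ w ∈ (Γ n).neighborFinset v, W ^ q := by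
          apply Finset.sum_le_sum
          intro w hw
          have hadj : (Γ n).Adj v w := (SimpleGraph.mem_neighborFinset _ _ _).mp hw
          have hd1 : (Γ n).dist v w ≤ 1 := by
            simpa using SimpleGraph.dist_le (SimpleGraph.Walk.cons hadj SimpleGraph.Walk.nil)
          have hle : ‖g v - g w‖ ≤ W := by
            refine le_trans ((hfb n v w).2) (le_trans (hωm ?_) (le_max_left _ _))
            exact_mod_cast hd1
          exact Real.rpow_le_rpow (norm_nonneg _) hle hq0.le
      _ = ((Γ n).degree v : ℝ) * W ^ q := by
          simp [Finset.sum_const, SimpleGraph.card_neighborFinset_eq_degree, nsmul_eq_mul]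
      _ ≤ (d : ℝ) * W ^ q := by
          apply mul_le_mul_of_nonneg_right _ hWq0
          exact_mod_cast hdeg n v
  have hsum : ∑ v : V n, ‖g v - m‖ ^ q ≤ (N : ℝ) * K := by
    have h1 := hpoincare n g
    have h2 : ∑ v : V n, ∑ w ∈ (Γ n).neighborFinset v, ‖g v - g w‖ ^ q
        ≤ (N : ℝ) * ((d : ℝ) * W ^ q) := by
      calc ∑ v : V n, ∑ w ∈ (Γ n).neighborFinset v, ‖g v - g w‖ ^ q
          ≤ ∑ _v : V n, (d : ℝ) * W ^ q := Finset.sum_le_sum (fun v _ => hedge v)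
        _ = (N : ℝ) * ((d : ℝ) * W ^ q) := by
            simp [Finset.sum_const, Finset.card_univ, nsmul_eq_mul, hNdef]
    have h3 : ((N : ℝ))⁻¹ * ∑ v : V n, ‖g v - m‖ ^ q ≤ K := by
      refine le_trans h1 ?_
      have : ((N : ℝ))⁻¹ * ∑ v : V n, ∑ w ∈ (Γ n).neighborFinset v, ‖g v - g w‖ ^ q
          ≤ (d : ℝ) * W ^ q := by
        rw [inv_mul_le_iff₀ hN0]
        exact h2
      calc C * (((N : ℝ))⁻¹ * ∑ v : V n, ∑ w ∈ (Γ n).neighborFinset v, ‖g v - g w‖ ^ q)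
          ≤ C * ((d : ℝ) * W ^ q) := by
            apply mul_le_mul_of_nonneg_left this hC.le
        _ = K := by rw [hKdef]; ring
    calc ∑ v : V n, ‖g v - m‖ ^ q
        = (N : ℝ) * (((N : ℝ))⁻¹ * ∑ v : V n, ‖g v - m‖ ^ q) := by
          field_simp
      _ ≤ (N : ℝ) * K := mul_le_mul_of_nonneg_left h3 hN0.le
  have hterm0 : ∀ v : V n, (0:ℝ) ≤ ‖g v - m‖ ^ q := fun v => Real.rpow_nonneg (norm_nonneg _) _
  set S : Finset (V n) := Finset.univ.filter (fun v => ‖g v - m‖ ^ q ≤ 2 * K + 1) with hSdef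
  have hcompl : ((Sᶜ).card : ℝ) * (2 * K + 1) ≤ (N : ℝ) * K := by
    have hle : ∀ v ∈ Sᶜ, 2 * K + 1 ≤ ‖g v - m‖ ^ q := by
      intro v hv
      have : ¬ (‖g v - m‖ ^ q ≤ 2 * K + 1) := by
        simpa [hSdef] using hv
      linarith [lt_of_not_ge this]
    calc ((Sᶜ).card : ℝ) * (2 * K + 1)
        ≤ ∑ v ∈ Sᶜ, ‖g v - m‖ ^ q := by
          have h5 := Finset.card_nsmul_le_sum Sᶜ (fun x => ‖g x - m‖ ^ q) (2 * K + 1) hle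
          rw [nsmul_eq_mul] at h5
          exact h5
      _ ≤ ∑ v : V n, ‖g v - m‖ ^ q :=
          Finset.sum_le_sum_of_subset_of_nonneg (Finset.subset_univ _)
            (fun v _ _ => hterm0 v)
      _ ≤ (N : ℝ) * K := hsum
  have hcardsum : (S.card : ℝ) + ((Sᶜ).card : ℝ) = (N : ℝ) := by
    exact_mod_cast congrArg (Nat.cast : ℕ → ℝ) (Finset.card_add_card_compl S)
  have hSc : ((Sᶜ).card : ℝ) < (N : ℝ) / 2 := by
    by_contra hcon
    push_neg at hcon
    have h4 : (N : ℝ) / 2 * (2 * K + 1) ≤ ((Sᶜ).card : ℝ) * (2 * K + 1) :=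
      mul_le_mul_of_nonneg_right hcon h2K1.le
    nlinarith
  have hS : ((d:ℝ) + 1) ^ r < (S.card : ℝ) := by linarith
  have hSnat : (d + 1) ^ r < S.card := by
    have : (((d + 1) ^ r : ℕ) : ℝ) < (S.card : ℝ) := by push_cast; linarith
    exact_mod_cast this
  obtain ⟨v, hv⟩ : S.Nonempty := Finset.card_pos.mp (lt_of_le_of_lt (Nat.zero_le _) hSnat)
  have hball := ball_card_le_aux (Γ n) (hdeg n) (hconn n) v r
  have hnsub : ¬ S ⊆ Finset.univ.filter (fun w => (Γ n).dist v w ≤ r) := by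
    intro hsub
    have := Finset.card_le_card hsub
    omega
  obtain ⟨w, hwS, hwB⟩ := Finset.not_subset.mp hnsub
  have hdist : r < (Γ n).dist v w := by
    by_contra hcon
    exact hwB (by simp [not_lt.mp hcon])
  have hnear : ∀ u ∈ S, ‖g u - m‖ ≤ B := by
    intro u hu
    have hu' : ‖g u - m‖ ^ q ≤ 2 * K + 1 := (Finset.mem_filter.mp hu).2
    have : ‖g u - m‖ ^ q ≤ B ^ q := by rw [hBq]; exact hu'
    exact (Real.rpow_le_rpow_iff (norm_nonneg _) hB0 hq0).mp this
  have h1 : 2 * B + 1 ≤ ρ (((Γ n).dist v w : ℕ) : ℝ) := by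
    refine le_trans hρr (hρm ?_)
    exact_mod_cast hdist.le
  have h2 : ρ (((Γ n).dist v w : ℕ) : ℝ) ≤ ‖g v - g w‖ := (hfb n v w).1
  have h3 : ‖g v - g w‖ ≤ ‖g v - m‖ + ‖g w - m‖ := by
    have := norm_sub_le (g v - m) (g w - m)
    simpa [sub_sub_sub_cancel_right] using this
  have hvb := hnear v hv
  have hwb := hnear w hwS
  linarith
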